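/- arXiv:1605.04142 — 3 statements merged into one kernel-verified Lean document; each statement's English description precedes it below -/
import Mathlib

section
/- Let S be a topological space and 𝒞 an ℝ-subalgebra of C⁰(S) admitting bump functions: for every x ∈ S and open neighborhood W of x there is a non-negative ρ ∈ 𝒞 with ρ(x) ≠ 0 and supp ρ ⊆ W. Then the evaluation map θ : S → |𝒞| is an open map onto its image with respect to the Gelfand topology. -/
/-- The Gelfand topology on the set `|A|` of unit-preserving ℝ-algebra homomorphisms
`A → ℝ`, generated by the sets `f~⁻¹(U)` for `f ∈ A` and `U ⊆ ℝ` open,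
where `f~(x) = x(f)`. -/
def gelfandTop {A : Type*} [CommRing A] [Algebra ℝ A] : TopologicalSpace (A →ₐ[ℝ] ℝ) :=
  TopologicalSpace.generateFrom
    {V | ∃ (f : A) (U : Set ℝ), IsOpen U ∧ V = {x : A →ₐ[ℝ] ℝ | x f ∈ U}}

/-- Evaluation at a point, as an ℝ-algebra homomorphism `C(S, ℝ) → ℝ`. -/
def cEval (S : Type*) [TopologicalSpace S] (p : S) : C(S, ℝ) →ₐ[ℝ] ℝ where
  toFun f := f p
  map_one' := rfl
  map_mul' _ _ := rfl
  map_zero' := rfl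
  map_add' _ _ := rfl
  commutes' _ := rfl

/-- The evaluation map `θ : S → |𝒞|`, `θ(p)(f) = f(p)`. -/
def evalHom {S : Type*} [TopologicalSpace S] (𝒞 : Subalgebra ℝ C(S, ℝ)) (p : S) :
    𝒞 →ₐ[ℝ] ℝ :=
  (cEval S p).comp 𝒞.val

/-- If `𝒞 ⊆ C⁰(S)` admits bump functions (for every `x ∈ S` and open
neighborhood `W` of `x` there is a non-negative `ρ ∈ 𝒞` with `ρ(x) ≠ 0` and
`supp ρ ⊆ W`), then the evaluation map `θ : S → |𝒞|` is an open map onto its image for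
the Gelfand topology: the image of every open set `W` is the trace on `range θ` of a
Gelfand-open set. -/
theorem stmt4 {S : Type*} [TopologicalSpace S] (𝒞 : Subalgebra ℝ C(S, ℝ))
    (hbump : ∀ (x : S) (W : Set S), IsOpen W → x ∈ W →
      ∃ ρ : C(S, ℝ), ρ ∈ 𝒞 ∧ (∀ p, 0 ≤ ρ p) ∧ ρ x ≠ 0 ∧
        closure {p | ρ p ≠ 0} ⊆ W)
    (W : Set S) (hW : IsOpen W) :
    ∃ V : Set (𝒞 →ₐ[ℝ] ℝ), @IsOpen _ gelfandTop V ∧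
      evalHom 𝒞 '' W = V ∩ Set.range (evalHom 𝒞) := by

  letI : TopologicalSpace (𝒞 →ₐ[ℝ] ℝ) := gelfandTop
  choose ρ hmem hnn hne hsupp using hbump
  refine ⟨⋃ (x : S) (hx : x ∈ W), {χ : 𝒞 →ₐ[ℝ] ℝ | χ ⟨ρ x W hW hx, hmem x W hW hx⟩ ∈ Set.Ioi (0:ℝ)}, ?_, ?_⟩
  · apply isOpen_iUnion; intro x; apply isOpen_iUnion; intro hx
    exact TopologicalSpace.GenerateOpen.basic _ ⟨_, Set.Ioi 0, isOpen_Ioi, rfl⟩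
  · ext χ
    constructor
    · rintro ⟨p, hp, rfl⟩
      refine ⟨Set.mem_iUnion.2 ⟨p, Set.mem_iUnion.2 ⟨hp, ?_⟩⟩, ⟨p, rfl⟩⟩
      have := hnn p W hW hp p
      have h2 := hne p W hW hp
      show (0:ℝ) < ρ p W hW hp p
      exact lt_of_le_of_ne this (Ne.symm h2)
    · rintro ⟨hV, q, rfl⟩
      obtain ⟨x, hx⟩ := Set.mem_iUnion.1 hV
      obtain ⟨hxW, hq⟩ := Set.mem_iUnion.1 hx
      have hq' : (0:ℝ) < ρ x W hW hxW q := hq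
      refine ⟨q, hsupp x W hW hxW (subset_closure ?_), rfl⟩
      exact ne_of_gt hq'
end

section
/- Let X be a topological space and ℱ an ℝ-algebra. There is a natural bijection between continuous maps X → |ℱ| (with the Gelfand topology) and ℝ-algebra homomorphisms ℱ → C⁰(X); i.e., the realization functor | · | : ℝ-Alg → Top^op is adjoint to the functor C⁰. -/
section Aux

variable {X : Type*} [TopologicalSpace X] {F : Type*} [CommRing F] [Algebra ℝ F]

/-- Evaluation at `f` is continuous for the Gelfand topology. -/
theorem gelfand_eval_continuous (f : F) :
    @Continuous (F →ₐ[ℝ] ℝ) ℝ gelfandTop _ (fun x => x f) := by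
  letI := @gelfandTop F _ _
  refine continuous_def.2 fun U hU => ?_
  exact TopologicalSpace.isOpen_generateFrom_of_mem ⟨f, U, hU, rfl⟩

/-- Φ : continuous maps to the spectrum give algebra homs to `C(X, ℝ)`. -/
noncomputable def Phi (g : {g : X → (F →ₐ[ℝ] ℝ) // @Continuous X (F →ₐ[ℝ] ℝ) _ gelfandTop g}) :
    F →ₐ[ℝ] C(X, ℝ) :=
  letI := @gelfandTop F _ _
  { toFun := fun f => ⟨fun x => g.1 x f, (gelfand_eval_continuous f).comp g.2⟩
    map_one' := by ext x; exact map_one (g.1 x)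
    map_mul' := fun a b => by ext x; exact map_mul (g.1 x) a b
    map_zero' := by ext x; exact map_zero (g.1 x)
    map_add' := fun a b => by ext x; exact map_add (g.1 x) a b
    commutes' := fun r => by ext x; exact (g.1 x).commutes r }

theorem psi_cont (φ : F →ₐ[ℝ] C(X, ℝ)) :
    @Continuous X (F →ₐ[ℝ] ℝ) _ gelfandTop
      (fun x => (ContinuousMap.evalAlgHom ℝ ℝ x).comp φ) := by
  refine continuous_generateFrom_iff.2 ?_
  rintro V ⟨f, U, hU, rfl⟩
  exact (φ f).continuous.isOpen_preimage U hU

/-- Ψ : algebra homs to `C(X, ℝ)` give continuous maps to the spectrum. -/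
noncomputable def Psi (φ : F →ₐ[ℝ] C(X, ℝ)) :
    {g : X → (F →ₐ[ℝ] ℝ) // @Continuous X (F →ₐ[ℝ] ℝ) _ gelfandTop g} :=
  ⟨fun x => (ContinuousMap.evalAlgHom ℝ ℝ x).comp φ, psi_cont φ⟩

/-- Φ and Ψ are mutually inverse. -/
noncomputable def gelfandEquiv :
    {g : X → (F →ₐ[ℝ] ℝ) // @Continuous X (F →ₐ[ℝ] ℝ) _ gelfandTop g} ≃
      (F →ₐ[ℝ] C(X, ℝ)) where
  toFun := Phi
  invFun := Psi
  left_inv g := by apply Subtype.ext; funext x; apply AlgHom.ext; intro f; rfl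
  right_inv φ := by apply AlgHom.ext; intro f; apply ContinuousMap.ext; intro x; rfl

end Aux

/-- For a topological space `X` and an ℝ-algebra `ℱ`, there is a bijection
between continuous maps `X → |ℱ|` (Gelfand topology) and ℝ-algebra homomorphisms
`ℱ → C⁰(X)`, given by `Φ(g)(f) = f~ ∘ g` with inverse `Ψ(φ)(x) = (f ↦ φ(f)(x))`;
i.e. the realization functor is adjoint to `C⁰`. -/
theorem stmt7 {X : Type*} [TopologicalSpace X] (F : Type*) [CommRing F] [Algebra ℝ F] :
    ∃ e : {g : X → (F →ₐ[ℝ] ℝ) // @Continuous X (F →ₐ[ℝ] ℝ) _ gelfandTop g} ≃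
        (F →ₐ[ℝ] C(X, ℝ)),
      (∀ (g : {g : X → (F →ₐ[ℝ] ℝ) // @Continuous X (F →ₐ[ℝ] ℝ) _ gelfandTop g})
          (f : F) (x : X), (e g f) x = (g : X → (F →ₐ[ℝ] ℝ)) x f) ∧
      (∀ (φ : F →ₐ[ℝ] C(X, ℝ)) (x : X) (f : F),
          ((e.symm φ : X → (F →ₐ[ℝ] ℝ)) x) f = (φ f) x) := by
  exact ⟨gelfandEquiv, fun g f x => rfl, fun φ x f => rfl⟩
end

section
/- Let (S,𝒞) and (S',𝒞') be topological spaces with ℝ-subalgebras of continuous functions such that the evaluation maps θ : S → |𝒞| and θ' : S' → |𝒞'| are homeomorphisms. Then every ℝ-algebra homomorphism u : 𝒞' → 𝒞 arises as φ* for a unique morphism of continuous spaces φ : (S,𝒞) → (S',𝒞'); explicitly φ = θ'⁻¹ ∘ |u| ∘ θ. -/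
/-- If `θ : S → |𝒞|` and `θ' : S' → |𝒞'|` are homeomorphisms for the
Gelfand topologies, then every ℝ-algebra homomorphism `u : 𝒞' → 𝒞` arises as `φ*` for a
unique morphism of continuous spaces `φ : (S,𝒞) → (S',𝒞')`, explicitly
`φ = θ'⁻¹ ∘ |u| ∘ θ`, i.e. `θ'(φ(x)) = θ(x) ∘ u` for all `x`. -/
theorem stmt9 {S S' : Type*} [TopologicalSpace S] [TopologicalSpace S']
    (𝒞 : Subalgebra ℝ C(S, ℝ)) (𝒞' : Subalgebra ℝ C(S', ℝ))
    (hθ : @IsHomeomorph S (𝒞 →ₐ[ℝ] ℝ) _ gelfandTop (evalHom 𝒞))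
    (hθ' : @IsHomeomorph S' (𝒞' →ₐ[ℝ] ℝ) _ gelfandTop (evalHom 𝒞'))
    (u : 𝒞' →ₐ[ℝ] 𝒞) :
    ∃! φ : C(S, S'),
      (∀ f ∈ 𝒞', f.comp φ ∈ 𝒞) ∧
      (∀ (f : 𝒞') (x : S), ((u f : C(S, ℝ)) x) = (f : C(S', ℝ)) (φ x)) ∧
      (∀ x : S, evalHom 𝒞' (φ x) = (evalHom 𝒞 x).comp u) := by
  letI : TopologicalSpace (𝒞 →ₐ[ℝ] ℝ) := gelfandTop
  letI : TopologicalSpace (𝒞' →ₐ[ℝ] ℝ) := gelfandTop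
  -- |u| : |𝒞| → |𝒞'| is continuous for the Gelfand topologies
  have hcont : Continuous (fun x : 𝒞 →ₐ[ℝ] ℝ => x.comp u) := by
    refine continuous_generateFrom_iff.2 ?_
    rintro V ⟨f, U, hU, rfl⟩
    exact TopologicalSpace.isOpen_generateFrom_of_mem ⟨u f, U, hU, rfl⟩
  let e' := hθ'.homeomorph (evalHom 𝒞')
  let φ₀ : S → S' := fun x => e'.symm ((evalHom 𝒞 x).comp u)
  have key : ∀ x : S, evalHom 𝒞' (φ₀ x) = (evalHom 𝒞 x).comp u := fun x =>
    e'.apply_symm_apply _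
  have key2 : ∀ (f : 𝒞') (x : S), ((u f : C(S, ℝ)) x) = (f : C(S', ℝ)) (φ₀ x) := by
    intro f x
    have := congrArg (fun g => g f) (key x)
    exact (this).symm
  have hφcont : Continuous φ₀ :=
    e'.symm.continuous.comp (hcont.comp hθ.continuous)
  refine ⟨⟨φ₀, hφcont⟩, ⟨?_, ?_, ?_⟩, ?_⟩
  · intro f hf
    have : ContinuousMap.comp f ⟨φ₀, hφcont⟩ = (u ⟨f, hf⟩ : C(S, ℝ)) := by
      ext x; exact (key2 ⟨f, hf⟩ x).symm
    rw [this]; exact (u ⟨f, hf⟩).2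
  · exact key2
  · exact key
  · rintro ψ ⟨-, -, h3⟩
    ext x
    have : evalHom 𝒞' (ψ x) = evalHom 𝒞' (φ₀ x) := (h3 x).trans (key x).symm
    exact hθ'.bijective.injective this
end
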